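/- arXiv:2309.10965 — 4 statements merged into one kernel-verified Lean document; each statement's English description precedes it below -/
import Mathlib

section
/- The Laplace mechanism satisfies ε-differential privacy: if f : D → ℝ has ℓ1-global sensitivity Δ, and M(D) = f(D) + e where e ~ Lap(0, Δ/ε), then for any neighboring datasets D₁, D₂ and any measurable set S ⊆ ℝ, P(M(D₁) ∈ S) ≤ e^ε · P(M(D₂) ∈ S). -/
/-!
The Laplace density `x ↦ exp (-|x - μ| / b) / (2b)` changes by at most the factor
`exp (|μ - ν| / b)` when its centre moves from `μ` to `ν`, by the triangle inequality
`|x - ν| ≤ |x - μ| + |μ - ν|`. Integrating this pointwise bound over `S` and using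
`|f d₁ - f d₂| ≤ Δ` with the scale `b = Δ / ε` gives the factor `exp ε`.
-/

open MeasureTheory Real Set Filter

theorem integrable_exp_neg_mul_abs {r : ℝ} (hr : 0 < r) :
    Integrable fun x : ℝ => exp (-(r * |x|)) := by
  have hcont : Continuous fun x : ℝ => exp (-(r * |x|)) := by fun_prop
  refine hcont.locallyIntegrable.integrable_of_isBigO_atTop_of_norm_isNegInvariant
    (g := fun x => exp (-r * x)) (ae_of_all _ fun x => by simp)
    ?_ ⟨Ioi 0, Ioi_mem_atTop 0, exp_neg_integrableOn_Ioi 0 hr⟩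
  refine EventuallyEq.isBigO ?_
  filter_upwards [eventually_ge_atTop 0] with x hx
  rw [abs_of_nonneg hx, neg_mul]

noncomputable def laplacePDF (μ b x : ℝ) : ℝ :=
  exp (-(|x - μ| / b)) / (2 * b)

theorem laplacePDF_nonneg (μ : ℝ) {b : ℝ} (hb : 0 ≤ b) (x : ℝ) :
    0 ≤ laplacePDF μ b x := by
  unfold laplacePDF; positivity

theorem integrable_laplacePDF (μ : ℝ) {b : ℝ} (hb : 0 < b) : Integrable (laplacePDF μ b) := by
  have h := ((integrable_exp_neg_mul_abs (inv_pos.2 hb)).comp_sub_right μ).div_const (2 * b)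
  refine h.congr (ae_of_all _ fun x => ?_)
  simp only [laplacePDF, inv_mul_eq_div]

theorem laplacePDF_le_exp_mul (μ ν : ℝ) {b : ℝ} (hb : 0 ≤ b) (x : ℝ) :
    laplacePDF μ b x ≤ exp (|μ - ν| / b) * laplacePDF ν b x := by
  have htri : |x - ν| / b ≤ |x - μ| / b + |μ - ν| / b := by
    rw [← add_div]; gcongr; exact abs_sub_le x μ ν
  have hexp : exp (-(|x - μ| / b)) ≤ exp (|μ - ν| / b) * exp (-(|x - ν| / b)) := by
    rw [← exp_add, exp_le_exp]; linarith
  unfold laplacePDF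
  rw [mul_div_assoc']
  gcongr

theorem setIntegral_laplacePDF_le (μ ν : ℝ) {b : ℝ} (hb : 0 < b) (S : Set ℝ) :
    ∫ x in S, laplacePDF μ b x ≤ exp (|μ - ν| / b) * ∫ x in S, laplacePDF ν b x := by
  rw [← integral_const_mul]
  exact integral_mono_of_nonneg (ae_of_all _ (laplacePDF_nonneg μ hb.le))
    ((integrable_laplacePDF ν hb).integrableOn.const_mul _)
    (ae_of_all _ (laplacePDF_le_exp_mul μ ν hb.le))

theorem laplace_mechanism_eps_dp_general {D : Type*} (Neighbor : D → D → Prop)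
    (f : D → ℝ) (Δ ε : ℝ) (hΔ : 0 < Δ) (hε : 0 < ε)
    (hsens : ∀ d₁ d₂, Neighbor d₁ d₂ → |f d₁ - f d₂| ≤ Δ)
    (d₁ d₂ : D) (hnb : Neighbor d₁ d₂) (S : Set ℝ) :
    ∫ x in S, (ε / (2 * Δ)) * Real.exp (-(ε * |x - f d₁| / Δ)) ≤
      Real.exp ε * ∫ x in S, (ε / (2 * Δ)) * Real.exp (-(ε * |x - f d₂| / Δ)) := by
  have hpdf : ∀ μ x,
      ε / (2 * Δ) * exp (-(ε * |x - μ| / Δ)) = laplacePDF μ (Δ / ε) x := by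
    intro μ x
    simp only [laplacePDF]
    field_simp
  have hfactor : exp (|f d₁ - f d₂| / (Δ / ε)) ≤ exp ε := by
    rw [exp_le_exp, div_div_eq_mul_div, div_le_iff₀ hΔ, mul_comm ε]
    exact mul_le_mul_of_nonneg_right (hsens d₁ d₂ hnb) hε.le
  simp only [hpdf]
  calc ∫ x in S, laplacePDF (f d₁) (Δ / ε) x
      ≤ exp (|f d₁ - f d₂| / (Δ / ε)) * ∫ x in S, laplacePDF (f d₂) (Δ / ε) x :=
        setIntegral_laplacePDF_le _ _ (div_pos hΔ hε) S
    _ ≤ exp ε * ∫ x in S, laplacePDF (f d₂) (Δ / ε) x := by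
        gcongr
        exact integral_nonneg (laplacePDF_nonneg _ (div_pos hΔ hε).le)

/-- The Laplace mechanism satisfies ε-differential privacy: adding Lap(0, Δ/ε) noise
to a function `f` of ℓ1-global sensitivity `Δ` yields output densities whose
probabilities on any measurable set differ by at most a factor `exp ε` between
neighboring datasets. -/
theorem laplace_mechanism_eps_dp {D : Type*} (Neighbor : D → D → Prop)
    (f : D → ℝ) (Δ ε : ℝ) (hΔ : 0 < Δ) (hε : 0 < ε)
    (hsens : ∀ d₁ d₂, Neighbor d₁ d₂ → |f d₁ - f d₂| ≤ Δ)
    (d₁ d₂ : D) (hnb : Neighbor d₁ d₂) (S : Set ℝ) (hS : MeasurableSet S) :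
    ∫ x in S, (ε / (2 * Δ)) * Real.exp (-(ε * |x - f d₁| / Δ)) ≤
      Real.exp ε * ∫ x in S, (ε / (2 * Δ)) * Real.exp (-(ε * |x - f d₂| / Δ)) :=
  laplace_mechanism_eps_dp_general Neighbor f Δ ε hΔ hε hsens d₁ d₂ hnb S
end

section
/- The exponential mechanism satisfies ε-differential privacy: given a finite candidate set R and a utility function u with ℓ1-global sensitivity Δ_u, the mechanism that outputs r ∈ R with probability proportional to exp(ε·u(D, r)/(2Δ_u)) satisfies ε-DP. -/
open Real

/-! If two score functions differ by at most `c` everywhere, then each numerator `exp (f r)` and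
the normalising sum move by a factor at most `exp c`, in opposite directions, so the normalised
weights differ by a factor at most `exp (2 c)`. With scores `ε u(D, r) / (2 Δ)`, sensitivity `Δ`
gives `c = ε / 2`. -/

section Softmax

variable {R : Type*} [Fintype R]

noncomputable def softmax (f : R → ℝ) (r : R) : ℝ :=
  exp (f r) / ∑ r', exp (f r')

lemma sum_exp_pos [Nonempty R] (f : R → ℝ) : 0 < ∑ r, exp (f r) :=
  Finset.sum_pos (fun _ _ => exp_pos _) Finset.univ_nonempty

lemma exp_le_exp_mul_exp_of_sub_le {a b c : ℝ} (h : a - b ≤ c) : exp a ≤ exp c * exp b := by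
  rw [← exp_add, exp_le_exp]
  linarith

lemma softmax_le_exp_mul_softmax [Nonempty R] {f g : R → ℝ} {c : ℝ}
    (hfg : ∀ r, |f r - g r| ≤ c) (r : R) :
    softmax f r ≤ exp (2 * c) * softmax g r := by
  have hnum : exp (f r) ≤ exp c * exp (g r) :=
    exp_le_exp_mul_exp_of_sub_le (abs_le.1 (hfg r)).2
  have hden : ∑ r', exp (g r') ≤ exp c * ∑ r', exp (f r') := by
    rw [Finset.mul_sum]
    refine Finset.sum_le_sum fun r' _ => exp_le_exp_mul_exp_of_sub_le ?_
    linarith [(abs_le.1 (hfg r')).1]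
  unfold softmax
  rw [mul_div_assoc', div_le_div_iff₀ (sum_exp_pos f) (sum_exp_pos g)]
  calc exp (f r) * ∑ r', exp (g r')
      ≤ (exp c * exp (g r)) * (exp c * ∑ r', exp (f r')) :=
        mul_le_mul hnum hden (sum_exp_pos g).le (by positivity)
    _ = exp (2 * c) * exp (g r) * ∑ r', exp (f r') := by
        rw [two_mul, exp_add]; ring

end Softmax

lemma abs_scaled_sub_le_half {ε Δ a b : ℝ} (hΔ : 0 < Δ) (hε : 0 ≤ ε) (hab : |a - b| ≤ Δ) :
    |ε * a / (2 * Δ) - ε * b / (2 * Δ)| ≤ ε / 2 := by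
  rw [← sub_div, ← mul_sub, abs_div, abs_mul, abs_of_nonneg hε,
    abs_of_pos (by positivity : (0 : ℝ) < 2 * Δ), div_le_iff₀ (by positivity)]
  linarith [mul_le_mul_of_nonneg_left hab hε]

/-- The exponential mechanism satisfies ε-differential privacy: outputting `r` with
probability proportional to `exp(ε u(D, r) / (2 Δᵤ))`, where `Δᵤ` is the ℓ1-global
sensitivity of the utility `u`, changes each output probability by at most a factor
`exp ε` between neighboring datasets. -/
theorem exponential_mechanism_eps_dp {D : Type*} (Neighbor : D → D → Prop)
    {R : Type*} [Fintype R] [Nonempty R]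
    (u : D → R → ℝ) (Δ ε : ℝ) (hΔ : 0 < Δ) (hε : 0 < ε)
    (hsens : ∀ r d₁ d₂, Neighbor d₁ d₂ → |u d₁ r - u d₂ r| ≤ Δ)
    (d₁ d₂ : D) (hnb : Neighbor d₁ d₂) (r : R) :
    Real.exp (ε * u d₁ r / (2 * Δ)) / (∑ r', Real.exp (ε * u d₁ r' / (2 * Δ))) ≤
      Real.exp ε *
        (Real.exp (ε * u d₂ r / (2 * Δ)) / (∑ r', Real.exp (ε * u d₂ r' / (2 * Δ)))) := by
  have hscore : ∀ r', |ε * u d₁ r' / (2 * Δ) - ε * u d₂ r' / (2 * Δ)| ≤ ε / 2 :=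
    fun r' => abs_scaled_sub_le_half hΔ hε.le (hsens r' d₁ d₂ hnb)
  have h := softmax_le_exp_mul_softmax hscore r
  rwa [mul_div_cancel₀ ε two_ne_zero] at h
end

section
/- The Gaussian mechanism satisfies probabilistic (ε, δ)-DP: if f is scalar with ℓ2-global sensitivity Δ, M(D) = f(D) + e with e ~ N(0, σ²), and σ ≥ (2ε)^{-1} Δ (√((Φ^{-1}(δ/2))² + 2ε) − Φ^{-1}(δ/2)), where Φ is the standard normal CDF, then for any neighboring datasets D₁, D₂, the probability (over the output distribution of M(D₁)) that the absolute log of the ratio of the output densities of M(D₁) and M(D₂) exceeds ε is at most δ. -/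
open MeasureTheory ProbabilityTheory Real Set
open scoped NNReal

/-! The privacy loss between `N(μ₁, σ²)` and `N(μ₂, σ²)` is affine in the output,
`L(x) = (μ₁ - μ₂)(2x - μ₁ - μ₂) / (2σ²)`. Writing `z = Φ⁻¹(δ/2)`, the lower bound on `σ` says that
the mean gap `a = |μ₁ - μ₂| ≤ Δ` lies below the positive root `σ(√(z² + 2ε) + z)` of
`a² - 2zσa - 2εσ²`, and this turns `|L(x)| > ε` into `|x - μ₁| > -σz`. Under `N(μ₁, σ²)` that
event has probability at most `2Φ(z) = δ`. -/

lemma NNReal.mk_sq_ne_zero {σ : ℝ} (hσ : σ ≠ 0) : NNReal.mk (σ ^ 2) (sq_nonneg σ) ≠ 0 := by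
  rw [ne_eq, ← NNReal.coe_eq_zero, NNReal.coe_mk]
  positivity

lemma gaussianPDFReal_mk_sq {σ : ℝ} (hσ : 0 < σ) (μ x : ℝ) :
    gaussianPDFReal μ (.mk (σ ^ 2) (sq_nonneg σ)) x =
      1 / (σ * √(2 * π)) * rexp (-(x - μ) ^ 2 / (2 * σ ^ 2)) := by
  rw [gaussianPDFReal_def, NNReal.coe_mk, mul_comm (2 * π), sqrt_mul (sq_nonneg σ), sqrt_sq hσ.le,
    one_div]

lemma gaussianPDFReal_zero_one (x : ℝ) :
    gaussianPDFReal 0 1 x = 1 / √(2 * π) * rexp (-x ^ 2 / 2) := by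
  simp [gaussianPDFReal]

lemma setIntegral_gaussianPDFReal {μ : ℝ} {v : ℝ≥0} (hv : v ≠ 0) (s : Set ℝ) :
    ∫ x in s, gaussianPDFReal μ v x = (gaussianReal μ v).real s := by
  rw [measureReal_def, gaussianReal_apply_eq_integral μ hv,
    ENNReal.toReal_ofReal (setIntegral_nonneg_of_ae (ae_of_all _ (gaussianPDFReal_nonneg μ v)))]

lemma log_gaussianPDFReal_div_gaussianPDFReal {v : ℝ≥0} (hv : v ≠ 0) (μ₁ μ₂ x : ℝ) :
    Real.log (gaussianPDFReal μ₁ v x / gaussianPDFReal μ₂ v x) =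
      (μ₁ - μ₂) * (2 * x - μ₁ - μ₂) / (2 * v) := by
  have hc : (√(2 * π * v))⁻¹ ≠ 0 := by positivity
  simp only [gaussianPDFReal_def]
  rw [mul_div_mul_left _ _ hc, ← exp_sub, log_exp]
  field_simp
  ring

lemma gaussianReal_zero_one_map_affine (σ μ : ℝ) :
    (gaussianReal 0 1).map (fun y ↦ σ * y + μ) = gaussianReal μ (.mk (σ ^ 2) (sq_nonneg σ)) := by
  have : (fun y ↦ σ * y + μ) = (· + μ) ∘ (σ * ·) := rfl
  rw [this, ← Measure.map_map (by fun_prop) (by fun_prop), gaussianReal_map_const_mul,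
    gaussianReal_map_add_const, mul_zero, zero_add, mul_one]

lemma gaussianReal_zero_one_real_lt_abs_le (t : ℝ) :
    (gaussianReal 0 1).real {y | t < |y|} ≤ 2 * (gaussianReal 0 1).real (Iic (-t)) := by
  set ν := gaussianReal 0 1
  have hsymm : ν.real (Ioi t) = ν.real (Iio (-t)) := by
    have : Ioi t = (fun y ↦ -y) ⁻¹' Iio (-t) := by ext; simp
    rw [this, ← map_measureReal_apply (by fun_prop) measurableSet_Iio, gaussianReal_map_neg,
      neg_zero]
  have hsplit : {y | t < |y|} = Iio (-t) ∪ Ioi t := by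
    ext y; simp [lt_abs, lt_neg, or_comm]
  calc ν.real {y | t < |y|} ≤ ν.real (Iio (-t)) + ν.real (Ioi t) := by
        rw [hsplit]; exact measureReal_union_le _ _
    _ ≤ 2 * ν.real (Iic (-t)) := by
        rw [hsymm, ← two_mul]
        exact mul_le_mul_of_nonneg_left (measureReal_mono Iio_subset_Iic_self) zero_le_two

lemma gaussianReal_real_lt_abs_sub_le {σ : ℝ} (hσ : 0 < σ) (μ t : ℝ) :
    (gaussianReal μ (.mk (σ ^ 2) (sq_nonneg σ))).real {x | σ * t < |x - μ|} ≤
      2 * (gaussianReal 0 1).real (Iic (-t)) := by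
  have hpre : (fun y ↦ σ * y + μ) ⁻¹' {x | σ * t < |x - μ|} = {y | t < |y|} := by
    ext y; simp [abs_mul, abs_of_pos hσ, mul_lt_mul_iff_of_pos_left hσ]
  rw [← gaussianReal_zero_one_map_affine, map_measureReal_apply (by fun_prop)
    (measurableSet_lt measurable_const (by fun_prop : Measurable fun x : ℝ ↦ |x - μ|)), hpre]
  exact gaussianReal_zero_one_real_lt_abs_le t

lemma setOf_lt_abs_log_gaussianPDFReal_div_subset {σ : ℝ} (hσ : σ ≠ 0) {ε z μ₁ μ₂ : ℝ}
    (hgap : |μ₁ - μ₂| ^ 2 - 2 * z * σ * |μ₁ - μ₂| ≤ 2 * ε * σ ^ 2) :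
    {x | ε < |Real.log (gaussianPDFReal μ₁ (.mk (σ ^ 2) (sq_nonneg σ)) x /
      gaussianPDFReal μ₂ (.mk (σ ^ 2) (sq_nonneg σ)) x)|} ⊆ {x | σ * -z < |x - μ₁|} := by
  intro x hx
  rw [mem_ofPred_eq, log_gaussianPDFReal_div_gaussianPDFReal (NNReal.mk_sq_ne_zero hσ),
    NNReal.coe_mk, abs_div, abs_mul, abs_of_pos (by positivity : (0 : ℝ) < 2 * σ ^ 2),
    lt_div_iff₀ (by positivity)] at hx
  set a := |μ₁ - μ₂|
  have htri : |2 * x - μ₁ - μ₂| ≤ 2 * |x - μ₁| + a := by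
    calc |2 * x - μ₁ - μ₂| = |2 * (x - μ₁) + (μ₁ - μ₂)| := by ring_nf
      _ ≤ |2 * (x - μ₁)| + a := abs_add_le _ _
      _ = 2 * |x - μ₁| + a := by rw [abs_mul, abs_two]
  have ha : 0 < a := by
    by_contra h
    have h0 : a = 0 := le_antisymm (not_lt.mp h) (abs_nonneg _)
    rw [h0] at hx hgap
    linarith
  rw [mem_ofPred_eq]
  nlinarith [mul_le_mul_of_nonneg_left htri ha.le]

lemma sq_sub_le_of_noise_scale_le {ε Δ z σ a : ℝ} (hε : 0 < ε) (ha : 0 ≤ a) (haΔ : a ≤ Δ)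
    (hσ : (2 * ε)⁻¹ * Δ * (√(z ^ 2 + 2 * ε) - z) ≤ σ) :
    a ^ 2 - 2 * z * σ * a ≤ 2 * ε * σ ^ 2 := by
  set s := √(z ^ 2 + 2 * ε)
  have hs2 : s ^ 2 = z ^ 2 + 2 * ε := sq_sqrt (by positivity)
  have hs : 0 ≤ s := sqrt_nonneg _
  have hzs : z < s := by nlinarith
  have hΔ : Δ * (s - z) ≤ 2 * ε * σ := by
    rwa [inv_mul_eq_div, div_mul_eq_mul_div, div_le_iff₀ (by positivity), mul_comm σ] at hσ
  have hΔσ : Δ ≤ σ * (s + z) := by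
    refine le_of_mul_le_mul_right (hΔ.trans_eq ?_) (sub_pos.mpr hzs)
    linear_combination (-σ) * hs2
  have hσ0 : 0 ≤ σ := by nlinarith
  nlinarith [mul_nonneg (sub_nonneg.mpr (haΔ.trans hΔσ)) (by nlinarith : 0 ≤ a - σ * (z - s))]

theorem gaussian_mechanism_prob_dp_general {D : Type*} (Neighbor : D → D → Prop)
    (f : D → ℝ) (Δ ε δ σ Φinv : ℝ)
    (hε : 0 < ε) (hσ : 0 < σ)
    -- `Φinv` is the standard normal quantile of δ/2:  Φ(Φinv) = δ/2
    (hΦinv : ∫ t in Set.Iic Φinv, (1 / Real.sqrt (2 * π)) * Real.exp (-t ^ 2 / 2) = δ / 2)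
    (hσbound : (2 * ε)⁻¹ * Δ * (Real.sqrt (Φinv ^ 2 + 2 * ε) - Φinv) ≤ σ)
    (hsens : ∀ d₁ d₂, Neighbor d₁ d₂ → |f d₁ - f d₂| ≤ Δ)
    (d₁ d₂ : D) (hnb : Neighbor d₁ d₂) :
    ∫ x in {x : ℝ |
        |Real.log (((1 / (σ * Real.sqrt (2 * π))) *
            Real.exp (-(x - f d₁) ^ 2 / (2 * σ ^ 2))) /
          ((1 / (σ * Real.sqrt (2 * π))) *
            Real.exp (-(x - f d₂) ^ 2 / (2 * σ ^ 2))))| > ε},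
        (1 / (σ * Real.sqrt (2 * π))) * Real.exp (-(x - f d₁) ^ 2 / (2 * σ ^ 2)) ≤ δ := by
  have hΦ : (gaussianReal 0 1).real (Iic Φinv) = δ / 2 := by
    rw [← setIntegral_gaussianPDFReal one_ne_zero, ← hΦinv]
    simp only [gaussianPDFReal_zero_one]
  have hgap := sq_sub_le_of_noise_scale_le hε (abs_nonneg _) (hsens d₁ d₂ hnb) hσbound
  simp only [← gaussianPDFReal_mk_sq hσ, gt_iff_lt]
  rw [setIntegral_gaussianPDFReal (NNReal.mk_sq_ne_zero hσ.ne')]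
  calc _ ≤ (gaussianReal (f d₁) (.mk (σ ^ 2) (sq_nonneg σ))).real {x | σ * -Φinv < |x - f d₁|} :=
        measureReal_mono (setOf_lt_abs_log_gaussianPDFReal_div_subset hσ.ne' hgap)
    _ ≤ 2 * (gaussianReal 0 1).real (Iic (- -Φinv)) := gaussianReal_real_lt_abs_sub_le hσ _ _
    _ = δ := by rw [neg_neg, hΦ]; ring

/-- The Gaussian mechanism satisfies probabilistic (ε, δ)-DP: for a scalar `f` of
ℓ2-global sensitivity Δ and noise N(0, σ²) with
σ ≥ (2ε)⁻¹ Δ (√((Φ⁻¹(δ/2))² + 2ε) − Φ⁻¹(δ/2)), where Φ is the standard normal CDF,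
the probability under the output distribution of M(D₁) that the absolute log density
ratio of M(D₁) to M(D₂) exceeds ε is at most δ. -/
theorem gaussian_mechanism_prob_dp {D : Type*} (Neighbor : D → D → Prop)
    (f : D → ℝ) (Δ ε δ σ Φinv : ℝ)
    (hΔ : 0 < Δ) (hε : 0 < ε) (hδ : 0 < δ) (hσ : 0 < σ)
    -- `Φinv` is the standard normal quantile of δ/2:  Φ(Φinv) = δ/2
    (hΦinv : ∫ t in Set.Iic Φinv, (1 / Real.sqrt (2 * π)) * Real.exp (-t ^ 2 / 2) = δ / 2)
    (hσbound : (2 * ε)⁻¹ * Δ * (Real.sqrt (Φinv ^ 2 + 2 * ε) - Φinv) ≤ σ)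
    (hsens : ∀ d₁ d₂, Neighbor d₁ d₂ → |f d₁ - f d₂| ≤ Δ)
    (d₁ d₂ : D) (hnb : Neighbor d₁ d₂) :
    ∫ x in {x : ℝ |
        |Real.log (((1 / (σ * Real.sqrt (2 * π))) *
            Real.exp (-(x - f d₁) ^ 2 / (2 * σ ^ 2))) /
          ((1 / (σ * Real.sqrt (2 * π))) *
            Real.exp (-(x - f d₂) ^ 2 / (2 * σ ^ 2))))| > ε},
        (1 / (σ * Real.sqrt (2 * π))) * Real.exp (-(x - f d₁) ^ 2 / (2 * σ ^ 2)) ≤ δ :=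
  gaussian_mechanism_prob_dp_general Neighbor f Δ ε δ σ Φinv hε hσ hΦinv hσbound hsens d₁ d₂ hnb
end

section
/- The ℓ1-global sensitivity of the sample variance of n observations bounded in [c₀, c₁] is at most (c₁ − c₀)²/n under the bounded neighboring dataset definition. -/
/-!
The centred sum of squares is a sum of pairwise squared differences,
`∑ᵢ (xᵢ - x̄)² = (1 / 2n) ∑ᵢ ∑ₖ (xᵢ - xₖ)²`. Changing observation `j` only changes the
`2(n - 1)` terms in which exactly one index is `j`, and each moves by at most `(c₁ - c₀)²`
because every squared difference lies in `[0, (c₁ - c₀)²]`. So the centred sum of squares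
moves by at most `(n - 1)(c₁ - c₀)² / n`, and the sample variance by `(c₁ - c₀)² / n`.
-/

open Finset

section
variable {ι : Type*} [Fintype ι]

theorem sum_sub_mean_sq_eq_sum_sum_sub_sq (x : ι → ℝ) :
    ∑ i, (x i - (∑ k, x k) / Fintype.card ι) ^ 2 =
      (∑ i, ∑ k, (x i - x k) ^ 2) / (2 * Fintype.card ι) := by
  rcases isEmpty_or_nonempty ι with hι | hι
  · simp
  have hcard : (Fintype.card ι : ℝ) ≠ 0 := by positivity
  simp only [sub_sq, sum_add_distrib, sum_sub_distrib, ← mul_sum, ← sum_mul, sum_const,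
    card_univ, nsmul_eq_mul]
  field_simp
  ring

variable [DecidableEq ι]

theorem sum_sum_eq_of_symm {M : Type*} [AddCommMonoid M] (f : ι → ι → M)
    (hf : ∀ i k, f i k = f k i) (j : ι) :
    ∑ i, ∑ k, f i k =
      f j j + 2 • ∑ k ∈ {j}ᶜ, f j k + ∑ i ∈ {j}ᶜ, ∑ k ∈ {j}ᶜ, f i k := by
  have hrow : ∀ i, ∑ k, f i k = f j i + ∑ k ∈ {j}ᶜ, f i k := fun i => by
    rw [Fintype.sum_eq_add_sum_compl j, hf]
  rw [Fintype.sum_eq_add_sum_compl j, Fintype.sum_eq_add_sum_compl j (f j)]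
  simp only [hrow, sum_add_distrib, two_nsmul]
  abel

theorem sum_sum_sub_sq_sub_eq_of_eq_off (x y : ι → ℝ) (j : ι) (hxy : ∀ i ≠ j, x i = y i) :
    ∑ i, ∑ k, (x i - x k) ^ 2 - ∑ i, ∑ k, (y i - y k) ^ 2 =
      2 * ∑ k ∈ {j}ᶜ, ((x j - x k) ^ 2 - (y j - y k) ^ 2) := by
  have hsymm (z : ι → ℝ) (i k : ι) : (z i - z k) ^ 2 = (z k - z i) ^ 2 := by ring
  have hoff : ∑ i ∈ {j}ᶜ, ∑ k ∈ {j}ᶜ, (x i - x k) ^ 2 =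
      ∑ i ∈ {j}ᶜ, ∑ k ∈ {j}ᶜ, (y i - y k) ^ 2 := by
    refine sum_congr rfl fun i hi => sum_congr rfl fun k hk => ?_
    rw [hxy i (by simpa using hi), hxy k (by simpa using hk)]
  rw [sum_sum_eq_of_symm _ (hsymm x) j, sum_sum_eq_of_symm _ (hsymm y) j, hoff,
    sum_sub_distrib]
  simp only [sub_self, nsmul_eq_mul]
  ring

theorem sq_sub_le_of_mem_Icc {a b c₀ c₁ : ℝ} (ha : a ∈ Set.Icc c₀ c₁) (hb : b ∈ Set.Icc c₀ c₁) :
    (a - b) ^ 2 ≤ (c₁ - c₀) ^ 2 := by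
  rw [← sq_abs, ← Real.dist_eq]
  exact pow_le_pow_left₀ dist_nonneg (Real.dist_le_of_mem_Icc ha hb) 2

theorem abs_sum_sub_mean_sq_sub_le {c₀ c₁ : ℝ} (x y : ι → ℝ) (j : ι)
    (hx : ∀ i, x i ∈ Set.Icc c₀ c₁) (hy : ∀ i, y i ∈ Set.Icc c₀ c₁)
    (hxy : ∀ i ≠ j, x i = y i) :
    |∑ i, (x i - (∑ k, x k) / Fintype.card ι) ^ 2 -
        ∑ i, (y i - (∑ k, y k) / Fintype.card ι) ^ 2| ≤
      (Fintype.card ι - 1) * (c₁ - c₀) ^ 2 / Fintype.card ι := by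
  have hterm : ∀ k, |(x j - x k) ^ 2 - (y j - y k) ^ 2| ≤ (c₁ - c₀) ^ 2 := fun k => by
    simpa using abs_sub_le_of_le_of_le (sq_nonneg _) (sq_sub_le_of_mem_Icc (hx j) (hx k))
      (sq_nonneg _) (sq_sub_le_of_mem_Icc (hy j) (hy k))
  have hpos : 0 < Fintype.card ι := Fintype.card_pos_iff.2 ⟨j⟩
  have hcard : (#({j}ᶜ : Finset ι) : ℝ) = Fintype.card ι - 1 := by
    rw [card_compl, card_singleton, Nat.cast_sub hpos, Nat.cast_one]
  have hdenom : (0 : ℝ) < 2 * Fintype.card ι := by positivity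
  have hsum : |∑ i, ∑ k, (x i - x k) ^ 2 - ∑ i, ∑ k, (y i - y k) ^ 2| ≤
      2 * ((Fintype.card ι - 1) * (c₁ - c₀) ^ 2) := by
    rw [sum_sum_sub_sq_sub_eq_of_eq_off x y j hxy, abs_mul, abs_two, ← hcard, ← nsmul_eq_mul]
    gcongr
    exact (abs_sum_le_sum_abs _ _).trans (sum_le_card_nsmul _ _ _ fun k _ => hterm k)
  rw [sum_sub_mean_sq_eq_sum_sum_sub_sq, sum_sub_mean_sq_eq_sum_sum_sub_sq, ← sub_div, abs_div,
    abs_of_pos hdenom]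
  calc _ ≤ 2 * ((Fintype.card ι - 1) * (c₁ - c₀) ^ 2) / (2 * Fintype.card ι) := by gcongr
    _ = _ := mul_div_mul_left _ _ two_ne_zero

end

theorem sample_variance_sensitivity_general (n : ℕ) (hn : 2 ≤ n) (c₀ c₁ : ℝ)
    (D₁ D₂ : Fin n → ℝ)
    (hD₁ : ∀ i, D₁ i ∈ Set.Icc c₀ c₁) (hD₂ : ∀ i, D₂ i ∈ Set.Icc c₀ c₁)
    (hnb : ∃ j, ∀ i, i ≠ j → D₁ i = D₂ i) :
    |(∑ i, (D₁ i - (∑ k, D₁ k) / n) ^ 2) / (n - 1) -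
        (∑ i, (D₂ i - (∑ k, D₂ k) / n) ^ 2) / (n - 1)| ≤
      (c₁ - c₀) ^ 2 / n := by
  obtain ⟨j, hj⟩ := hnb
  have hn1 : (0 : ℝ) < n - 1 := by
    rw [sub_pos]; exact_mod_cast hn
  have hdiff := abs_sum_sub_mean_sq_sub_le D₁ D₂ j hD₁ hD₂ hj
  rw [Fintype.card_fin] at hdiff
  rw [← sub_div, abs_div, abs_of_pos hn1, div_le_iff₀ hn1]
  calc _ ≤ ((n : ℝ) - 1) * (c₁ - c₀) ^ 2 / n := hdiff
    _ = (c₁ - c₀) ^ 2 / n * (n - 1) := by ring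

/-- The ℓ1-global sensitivity of the sample variance of n observations bounded in
[c₀, c₁] is at most (c₁ − c₀)²/n under the bounded neighboring dataset definition. -/
theorem sample_variance_sensitivity (n : ℕ) (hn : 2 ≤ n) (c₀ c₁ : ℝ) (hc : c₀ ≤ c₁)
    (D₁ D₂ : Fin n → ℝ)
    (hD₁ : ∀ i, D₁ i ∈ Set.Icc c₀ c₁) (hD₂ : ∀ i, D₂ i ∈ Set.Icc c₀ c₁)
    (hnb : ∃ j, ∀ i, i ≠ j → D₁ i = D₂ i) :
    |(∑ i, (D₁ i - (∑ k, D₁ k) / n) ^ 2) / (n - 1) -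
        (∑ i, (D₂ i - (∑ k, D₂ k) / n) ^ 2) / (n - 1)| ≤
      (c₁ - c₀) ^ 2 / n :=
  sample_variance_sensitivity_general n hn c₀ c₁ D₁ D₂ hD₁ hD₂ hnb
end
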